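/- arXiv:2406.02609 — 3 statements merged into one kernel-verified Lean document; each statement's English description precedes it below -/
import Mathlib

section
/- Fix a class c with logit l_c distributed as a Gaussian N(μ_c, σ_c²) with σ_c > 0, and fix the remaining logits l_i ∈ ℝ for i ≠ c. For β > 0 and τ ∈ (0,1), the probability that the softmax confidence of class c exceeds τ, i.e. P( exp(β·l_c)/(exp(β·l_c) + Σ_{i≠c} exp(β·l_i)) > τ ), equals Φ( (1/σ_c)·( μ_c − (1/β)·log(τ/(1−τ)) − (1/β)·log( Σ_{i≠c} exp(β·l_i) ) ) ), where Φ is the cumulative distribution function of the standard normal distribution. -/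
/-! With `S = ∑_{i ≠ c} exp (β l_i)`, the softmax confidence of class `c` is
`sigmoid (β l_c - log S)`; since `sigmoid` is strictly increasing and
`sigmoid (log (τ / (1 - τ))) = τ`, the event is the half-line `l_c > t` with
`t = (log (τ / (1 - τ)) + log S) / β`. The standardised variable `(μ_c - l_c) / σ_c` is
standard normal, and it maps that half-line onto `Iic ((μ_c - t) / σ_c)`. -/

open Finset ProbabilityTheory MeasureTheory

/-- The standard normal cumulative distribution function `Φ`. -/
noncomputable def stdNormalCDF (x : ℝ) : ℝ :=
  (ProbabilityTheory.gaussianReal 0 1 (Set.Iic x)).toReal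

open Real Set

lemma exp_div_exp_add_eq_sigmoid {S : ℝ} (hS : 0 < S) (y : ℝ) :
    exp y / (exp y + S) = sigmoid (y - log S) := by
  rw [sigmoid_def, neg_sub, exp_sub, exp_log hS]
  field_simp

lemma sigmoid_log_div_one_sub {τ : ℝ} (hτ : τ ∈ Ioo (0 : ℝ) 1) :
    sigmoid (log (τ / (1 - τ))) = τ := by
  obtain ⟨hτ0, hτ1⟩ := hτ
  have h1τ : 0 < 1 - τ := sub_pos.mpr hτ1
  rw [sigmoid_def, ← log_inv, exp_log (by positivity), inv_div]
  field_simp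
  ring

lemma lt_exp_div_exp_add_iff {β S τ x : ℝ} (hβ : 0 < β) (hS : 0 < S)
    (hτ : τ ∈ Ioo (0 : ℝ) 1) :
    τ < exp (β * x) / (exp (β * x) + S) ↔ (log (τ / (1 - τ)) + log S) / β < x := by
  have h := sigmoid_lt_iff (a := log (τ / (1 - τ))) (b := β * x - log S)
  rw [sigmoid_log_div_one_sub hτ] at h
  rw [exp_div_exp_add_eq_sigmoid hS, h, div_lt_iff₀' hβ]
  constructor <;> intro h <;> linarith

lemma gaussianReal_map_standardize (μ : ℝ) {σ : ℝ} (hσ : σ ≠ 0) :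
    (gaussianReal μ (σ ^ 2).toNNReal).map (fun x ↦ (μ - x) / σ) = gaussianReal 0 1 := by
  have hcomp : (fun x ↦ (μ - x) / σ) = (· / σ) ∘ (μ - ·) := rfl
  rw [hcomp, ← Measure.map_map (by fun_prop) (by fun_prop), gaussianReal_map_const_sub,
    gaussianReal_map_div_const, sub_self, zero_div]
  congr
  ext
  simp [max_eq_left (sq_nonneg σ), hσ]

lemma gaussianReal_Ioi {μ σ : ℝ} (hσ : 0 < σ) (t : ℝ) :
    gaussianReal μ (σ ^ 2).toNNReal (Ioi t) = gaussianReal 0 1 (Iic ((μ - t) / σ)) := by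
  have : NullSingletonClass (gaussianReal μ (σ ^ 2).toNNReal) :=
    nullSingletonClass_gaussianReal (by simp [hσ.ne'])
  have hpre : (fun x ↦ (μ - x) / σ) ⁻¹' Iic ((μ - t) / σ) = Ici t := by
    ext x
    simp only [Set.mem_preimage, Set.mem_Iic, Set.mem_Ici, div_le_div_iff_of_pos_right hσ,
      sub_le_sub_iff_left]
  rw [← gaussianReal_map_standardize μ hσ.ne', Measure.map_apply (by fun_prop) measurableSet_Iic,
    hpre, measure_congr Ioi_ae_eq_Ici]

/-- Class Probability Distribution (Lemma 3.1, multi-class form): if the logit of class `c`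
is Gaussian `N(μ_c, σ_c²)` and the remaining logits `l i` (for `i ≠ c`) are fixed, then the
probability that the softmax confidence of class `c` (with inverse-temperature `β > 0`)
exceeds `τ ∈ (0,1)` equals
`Φ((1/σ_c)·(μ_c − (1/β)·log(τ/(1−τ)) − (1/β)·log(Σ_{i≠c} exp(β·l i))))`. -/
theorem gaussian_softmax_acceptance_prob (C : ℕ) (hC : 2 ≤ C) (c : Fin C)
    (μc σc β τ : ℝ) (hσ : 0 < σc) (hβ : 0 < β) (hτ : τ ∈ Set.Ioo (0 : ℝ) 1)
    (l : Fin C → ℝ) :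
    ((ProbabilityTheory.gaussianReal μc (Real.toNNReal (σc ^ 2)))
        {x : ℝ | Real.exp (β * x) /
            (Real.exp (β * x) + ∑ i ∈ Finset.univ.erase c, Real.exp (β * l i)) > τ}).toReal
      = stdNormalCDF ((1 / σc) * (μc - (1 / β) * Real.log (τ / (1 - τ))
          - (1 / β) * Real.log (∑ i ∈ Finset.univ.erase c, Real.exp (β * l i)))) := by
  set S := ∑ i ∈ Finset.univ.erase c, exp (β * l i)
  have hS : 0 < S := by
    have : Nontrivial (Fin C) := Fin.nontrivial_iff_two_le.mpr hC
    exact Finset.sum_pos (fun i _ ↦ exp_pos _)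
      ((Finset.erase_nonempty (Finset.mem_univ c)).mpr Finset.univ_nontrivial)
  have hevent : {x : ℝ | exp (β * x) / (exp (β * x) + S) > τ}
      = Ioi ((log (τ / (1 - τ)) + log S) / β) := by
    ext x
    exact lt_exp_div_exp_add_iff hβ hS hτ
  rw [hevent, gaussianReal_Ioi hσ, stdNormalCDF]
  congr 3
  field_simp
  ring
end

section
/- Let n > 0 and m > 0, and define g(z) = ½·Φ(n·z − m) + ½·Φ(−n·z − m), where Φ is the standard normal CDF. Then g is strictly increasing on (0, ∞). -/
open ProbabilityTheory MeasureTheory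
open scoped NNReal Real

lemma continuous_stdPDF : Continuous (gaussianPDFReal 0 1) := by
  unfold gaussianPDFReal
  fun_prop

lemma stdNormalCDF_eq (x : ℝ) :
    stdNormalCDF x = ∫ t in Set.Iic x, gaussianPDFReal 0 1 t := by
  rw [stdNormalCDF, gaussianReal_apply_eq_integral _ (by norm_num) _,
    ENNReal.toReal_ofReal]
  exact setIntegral_nonneg measurableSet_Iic fun t _ => gaussianPDFReal_nonneg 0 1 t

lemma hasDerivAt_stdNormalCDF (x : ℝ) :
    HasDerivAt stdNormalCDF (gaussianPDFReal 0 1 x) x := by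
  have hint : Integrable (gaussianPDFReal 0 1) := integrable_gaussianPDFReal 0 1
  have heq : ∀ y : ℝ, stdNormalCDF y =
      (∫ t in Set.Iic (0:ℝ), gaussianPDFReal 0 1 t) +
        ∫ t in (0:ℝ)..y, gaussianPDFReal 0 1 t := by
    intro y
    rw [stdNormalCDF_eq, ← intervalIntegral.integral_Iic_sub_Iic hint.integrableOn
      hint.integrableOn]
    ring
  have hd : HasDerivAt (fun y => (∫ t in Set.Iic (0:ℝ), gaussianPDFReal 0 1 t) +
      ∫ t in (0:ℝ)..y, gaussianPDFReal 0 1 t) (gaussianPDFReal 0 1 x) x :=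
    ((continuous_stdPDF.integral_hasStrictDerivAt 0 x).hasDerivAt).const_add _
  exact hd.congr_deriv rfl |>.congr_of_eventuallyEq (Filter.Eventually.of_forall
    fun y => (heq y))

lemma stdPDF_even (x : ℝ) : gaussianPDFReal 0 1 (-x) = gaussianPDFReal 0 1 x := by
  simp [gaussianPDFReal, neg_sq]

lemma stdPDF_strict_anti {a b : ℝ} (h : a ^ 2 < b ^ 2) :
    gaussianPDFReal 0 1 b < gaussianPDFReal 0 1 a := by
  unfold gaussianPDFReal
  have h2 : (0:ℝ) < (√(2 * Real.pi * (1:ℝ≥0)))⁻¹ := by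
    rw [inv_pos]
    have : (0:ℝ) < 2 * Real.pi * (1:ℝ≥0) := by
      simp [Real.pi_pos]
    exact Real.sqrt_pos.mpr this
  refine mul_lt_mul_of_pos_left ?_ h2
  apply Real.exp_lt_exp.mpr
  have hv : ((1:ℝ≥0):ℝ) = 1 := rfl
  simp only [sub_zero, hv]
  nlinarith

/-- For `n > 0` and `m > 0`, the function `g(z) = ½·Φ(n·z − m) + ½·Φ(−n·z − m)` is strictly
increasing on `(0, ∞)`. -/
theorem half_cdf_sum_strictMono (n m : ℝ) (hn : 0 < n) (hm : 0 < m) :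
    StrictMonoOn (fun z : ℝ =>
      (1 / 2) * stdNormalCDF (n * z - m) + (1 / 2) * stdNormalCDF (-(n * z) - m))
      (Set.Ioi (0 : ℝ)) := by
  set g : ℝ → ℝ := fun z =>
    (1 / 2) * stdNormalCDF (n * z - m) + (1 / 2) * stdNormalCDF (-(n * z) - m) with hg
  have hderiv : ∀ z : ℝ, HasDerivAt g
      ((1 / 2) * (gaussianPDFReal 0 1 (n * z - m) * n) +
        (1 / 2) * (gaussianPDFReal 0 1 (-(n * z) - m) * (-n))) z := by
    intro z
    have h1 : HasDerivAt (fun z : ℝ => n * z - m) n z := by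
      simpa using ((hasDerivAt_id z).const_mul n).sub_const m
    have h2 : HasDerivAt (fun z : ℝ => -(n * z) - m) (-n) z := by
      simpa using (((hasDerivAt_id z).const_mul n).neg).sub_const m
    exact (((hasDerivAt_stdNormalCDF (n * z - m)).comp z h1).const_mul (1/2)).add
      ((((hasDerivAt_stdNormalCDF (-(n * z) - m)).comp z h2).const_mul (1/2)))
  have hpos : ∀ z ∈ Set.Ioi (0:ℝ), 0 < deriv g z := by
    intro z hz
    rw [(hderiv z).deriv]
    have hlt : gaussianPDFReal 0 1 (-(n * z) - m) < gaussianPDFReal 0 1 (n * z - m) := by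
      have h1 : gaussianPDFReal 0 1 (-(n * z) - m) = gaussianPDFReal 0 1 (n * z + m) := by
        rw [show -(n * z) - m = -(n * z + m) by ring, stdPDF_even]
      rw [h1]
      apply stdPDF_strict_anti
      have hz' : (0:ℝ) < z := hz
      nlinarith [mul_pos hn hz']
    nlinarith
  exact strictMonoOn_of_deriv_pos (convex_Ioi 0)
    (fun z _ => ((hderiv z).differentiableAt.continuousAt.continuousWithinAt))
    (by simpa [interior_Ioi] using hpos)
end

section
/- Consider the symmetric binary pseudo-labeling model: X is drawn from the mixture ½·N(μ1, σ²) + ½·N(μ2, σ²) with σ > 0 and μ1 > μ2, the confidence is s(x) = 1/(1 + exp(−β(x − (μ1+μ2)/2))) with β > 0, and τ ∈ (1/2, 1). Then the masking probability P( 1 − τ ≤ s(X) ≤ τ ) is strictly decreasing as a function of the class-mean gap μ1 − μ2 (with (μ1+μ2)/2, σ, β, τ held fixed); i.e., the probability that a sample receives pseudo-label 0 increases as the class means get closer. -/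
open ProbabilityTheory MeasureTheory ENNReal
open scoped NNReal

/-- The equal-weight Gaussian mixture `½·N(μ1, σ1²) + ½·N(μ2, σ2²)`. -/
noncomputable def gaussianMixture (μ1 μ2 σ1 σ2 : ℝ) : Measure ℝ :=
  (1 / 2 : ℝ≥0∞) • ProbabilityTheory.gaussianReal μ1 (Real.toNNReal (σ1 ^ 2)) +
  (1 / 2 : ℝ≥0∞) • ProbabilityTheory.gaussianReal μ2 (Real.toNNReal (σ2 ^ 2))

lemma continuous_gaussianPDFReal_aux (μ : ℝ) (v : ℝ≥0) :
    Continuous (ProbabilityTheory.gaussianPDFReal μ v) := by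
  unfold ProbabilityTheory.gaussianPDFReal
  fun_prop

lemma gaussianPDFReal_even_aux (v : ℝ≥0) (x : ℝ) :
    ProbabilityTheory.gaussianPDFReal 0 v (-x) = ProbabilityTheory.gaussianPDFReal 0 v x := by
  unfold ProbabilityTheory.gaussianPDFReal
  ring_nf

lemma gaussianPDFReal_lt_aux {v : ℝ≥0} (hv : 0 < (v : ℝ)) {x y : ℝ} (h : x ^ 2 < y ^ 2) :
    ProbabilityTheory.gaussianPDFReal 0 v y < ProbabilityTheory.gaussianPDFReal 0 v x := by
  unfold ProbabilityTheory.gaussianPDFReal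
  have hπ : (0 : ℝ) < Real.pi := Real.pi_pos
  have hK : 0 < (Real.sqrt (2 * Real.pi * v))⁻¹ := by positivity
  have h2v : (0 : ℝ) < 2 * v := by linarith
  apply mul_lt_mul_of_pos_left _ hK
  apply Real.exp_lt_exp.mpr
  have hlt : -(y - 0) ^ 2 < -(x - 0) ^ 2 := by nlinarith
  exact div_lt_div_of_pos_right hlt h2v

/-- The mask set is the closed interval `[mid - c, mid + c]` with
`c = log (τ/(1-τ)) / β`. -/
lemma mask_set_eq (mid β τ : ℝ) (hβ : 0 < β) (hτ : τ ∈ Set.Ioo (1 / 2 : ℝ) 1) :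
    {x : ℝ | 1 - τ ≤ 1 / (1 + Real.exp (-β * (x - mid)))
      ∧ 1 / (1 + Real.exp (-β * (x - mid))) ≤ τ}
    = Set.Icc (mid - Real.log (τ / (1 - τ)) / β) (mid + Real.log (τ / (1 - τ)) / β) := by
  obtain ⟨hτhalf, hτ1⟩ := hτ
  have hτ0 : 0 < τ := by linarith
  set r := τ / (1 - τ) with hrdef
  have h1τ : 0 < 1 - τ := by linarith
  have hr0 : 0 < r := div_pos hτ0 h1τ
  have hloginv : Real.log ((1 - τ) / τ) = -Real.log r := by
    rw [hrdef, ← inv_div, Real.log_inv]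
  ext x
  simp only [Set.mem_setOf_eq, Set.mem_Icc]
  set E := Real.exp (-β * (x - mid)) with hEdef
  have hE0 : 0 < E := Real.exp_pos _
  have h1E : 0 < 1 + E := by linarith
  have hlogE : Real.log E = -β * (x - mid) := Real.log_exp _
  constructor
  · rintro ⟨h1, h2⟩
    have h1' : (1 - τ) * (1 + E) ≤ 1 := (le_div_iff₀ h1E).mp h1
    have h2' : 1 ≤ τ * (1 + E) := (div_le_iff₀ h1E).mp h2
    constructor
    · -- from h1' : E ≤ r, so  -β(x-mid) ≤ log r, so mid - log r / β ≤ x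
      have hEr : E ≤ r := by rw [hrdef, le_div_iff₀ h1τ]; nlinarith
      have hlog : -β * (x - mid) ≤ Real.log r := by
        rw [← hlogE]; exact Real.log_le_log hE0 hEr
      have h3 : (mid - x) * β ≤ Real.log r := by nlinarith
      have h4 := (le_div_iff₀ hβ).mpr h3
      linarith
    · -- from h2' : (1-τ)/τ ≤ E, so -log r ≤ -β(x-mid), so x ≤ mid + log r / β
      have hEr : (1 - τ) / τ ≤ E := by rw [div_le_iff₀ hτ0]; nlinarith
      have hlog : -Real.log r ≤ -β * (x - mid) := by
        rw [← hloginv, ← hlogE]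
        exact Real.log_le_log (by positivity) hEr
      have h3 : (x - mid) * β ≤ Real.log r := by nlinarith
      have h4 := (le_div_iff₀ hβ).mpr h3
      linarith
  · rintro ⟨hl, hu⟩
    have hlog1 : (mid - x) * β ≤ Real.log r := by
      have : mid - x ≤ Real.log r / β := by linarith
      exact (le_div_iff₀ hβ).mp this
    have hlog2 : (x - mid) * β ≤ Real.log r := by
      have : x - mid ≤ Real.log r / β := by linarith
      exact (le_div_iff₀ hβ).mp this
    have hEr : E ≤ r := by
      calc E ≤ Real.exp (Real.log r) := Real.exp_le_exp.mpr (by nlinarith)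
        _ = r := Real.exp_log hr0
    have hrE : (1 - τ) / τ ≤ E := by
      calc (1 - τ) / τ = Real.exp (Real.log ((1 - τ) / τ)) :=
            (Real.exp_log (by positivity)).symm
        _ ≤ E := Real.exp_le_exp.mpr (by rw [hloginv]; nlinarith)
    have hEr' : E * (1 - τ) ≤ τ := (le_div_iff₀ h1τ).mp hEr
    have hrE' : 1 - τ ≤ E * τ := (div_le_iff₀ hτ0).mp hrE
    constructor
    · rw [le_div_iff₀ h1E]; nlinarith
    · rw [div_le_iff₀ h1E]; nlinarith

/-- The mixture measure of the symmetric interval, as an interval integral of the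
centered Gaussian pdf. -/
lemma mixture_Icc_eq (mid σ : ℝ) (hσ : 0 < σ) (c z : ℝ) (hc : 0 < c) :
    ((gaussianMixture (mid + z / 2) (mid - z / 2) σ σ)
        (Set.Icc (mid - c) (mid + c))).toReal
    = ∫ x in (z / 2 - c)..(z / 2 + c),
        ProbabilityTheory.gaussianPDFReal 0 (Real.toNNReal (σ ^ 2)) x := by
  set v := Real.toNNReal (σ ^ 2) with hvdef
  have hvne : v ≠ 0 := by
    rw [hvdef]
    exact (Real.toNNReal_pos.mpr (by positivity)).ne'
  have hab : mid - c ≤ mid + c := by linarith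
  unfold gaussianMixture
  rw [Measure.add_apply, Measure.smul_apply, Measure.smul_apply, smul_eq_mul, smul_eq_mul]
  rw [ENNReal.toReal_add
      (ENNReal.mul_ne_top (by norm_num) (measure_ne_top _ _))
      (ENNReal.mul_ne_top (by norm_num) (measure_ne_top _ _)),
    ENNReal.toReal_mul, ENNReal.toReal_mul]
  rw [gaussianReal_apply_eq_integral _ hvne, gaussianReal_apply_eq_integral _ hvne]
  rw [ENNReal.toReal_ofReal (integral_nonneg fun x => gaussianPDFReal_nonneg _ _ _),
    ENNReal.toReal_ofReal (integral_nonneg fun x => gaussianPDFReal_nonneg _ _ _)]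
  rw [MeasureTheory.integral_Icc_eq_integral_Ioc, MeasureTheory.integral_Icc_eq_integral_Ioc,
    ← intervalIntegral.integral_of_le hab, ← intervalIntegral.integral_of_le hab]
  have hpdf : ∀ m x : ℝ, ProbabilityTheory.gaussianPDFReal m v x
      = ProbabilityTheory.gaussianPDFReal 0 v (x - m) := by
    intro m x
    rw [ProbabilityTheory.gaussianPDFReal_sub, zero_add]
  simp_rw [hpdf (mid + z / 2), hpdf (mid - z / 2)]
  rw [intervalIntegral.integral_comp_sub_right
      (fun x => ProbabilityTheory.gaussianPDFReal 0 v x) (mid + z / 2),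
    intervalIntegral.integral_comp_sub_right
      (fun x => ProbabilityTheory.gaussianPDFReal 0 v x) (mid - z / 2)]
  have e1 : mid - c - (mid + z / 2) = -(z / 2 + c) := by ring
  have e2 : mid + c - (mid + z / 2) = -(z / 2 - c) := by ring
  have e3 : mid - c - (mid - z / 2) = z / 2 - c := by ring
  have e4 : mid + c - (mid - z / 2) = z / 2 + c := by ring
  rw [e1, e2, e3, e4]
  have hflip : (∫ x in (-(z / 2 + c))..(-(z / 2 - c)),
      ProbabilityTheory.gaussianPDFReal 0 v x)
      = ∫ x in (z / 2 - c)..(z / 2 + c), ProbabilityTheory.gaussianPDFReal 0 v x := by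
    rw [← intervalIntegral.integral_comp_neg
        (fun x => ProbabilityTheory.gaussianPDFReal 0 v x)]
    simp_rw [gaussianPDFReal_even_aux]
  rw [hflip]
  have hhalf : ((1 / 2 : ℝ≥0∞)).toReal = 1 / 2 := by norm_num
  rw [hhalf]
  ring

/-- Principle 3 (symmetric binary model): with the midpoint `mid = (μ1+μ2)/2`, common standard
deviation `σ > 0`, confidence `s(x) = 1/(1 + exp(−β(x − mid)))` with `β > 0`, and threshold
`τ ∈ (1/2,1)` held fixed, the masking probability `P(1 − τ ≤ s(X) ≤ τ)` for
`X ~ ½N(mid + z/2, σ²) + ½N(mid − z/2, σ²)` is strictly decreasing in the class-mean gap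
`z = μ1 − μ2 > 0`: the closer the class means, the more samples are masked. -/
theorem mask_prob_strictAnti_in_gap (mid σ β τ : ℝ)
    (hσ : 0 < σ) (hβ : 0 < β) (hτ : τ ∈ Set.Ioo (1 / 2 : ℝ) 1) :
    StrictAntiOn (fun z : ℝ =>
      ((gaussianMixture (mid + z / 2) (mid - z / 2) σ σ)
          {x : ℝ | 1 - τ ≤ 1 / (1 + Real.exp (-β * (x - mid)))
            ∧ 1 / (1 + Real.exp (-β * (x - mid))) ≤ τ}).toReal)
      (Set.Ioi (0 : ℝ)) := by
  obtain ⟨hτhalf, hτ1⟩ := hτ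
  have h1τ : 0 < 1 - τ := by linarith
  have hr1 : 1 < τ / (1 - τ) := by rw [lt_div_iff₀ h1τ]; linarith
  set c := Real.log (τ / (1 - τ)) / β with hcdef
  have hc : 0 < c := div_pos (Real.log_pos hr1) hβ
  have hset := mask_set_eq mid β τ hβ ⟨hτhalf, hτ1⟩
  set v := Real.toNNReal (σ ^ 2) with hvdef
  have hv : (0 : ℝ) < (v : ℝ) := by
    rw [hvdef, Real.coe_toNNReal _ (sq_nonneg σ)]; positivity
  intro z1 hz1 z2 hz2 h12
  simp only [hset, ← hcdef]
  rw [mixture_Icc_eq mid σ hσ c z1 hc, mixture_Icc_eq mid σ hσ c z2 hc]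
  set f := ProbabilityTheory.gaussianPDFReal 0 v with hfdef
  have hcont : Continuous f := continuous_gaussianPDFReal_aux 0 v
  have hii : ∀ a b : ℝ, IntervalIntegrable f volume a b :=
    fun a b => hcont.intervalIntegrable a b
  have hcont2 : Continuous fun x : ℝ => f (x + 2 * c) :=
    hcont.comp (by continuity)
  have hz1' : (0 : ℝ) < z1 := hz1
  have key : 0 < ∫ x in (z1 / 2 - c)..(z2 / 2 - c), (f x - f (x + 2 * c)) := by
    apply intervalIntegral.intervalIntegral_pos_of_pos_on
    · exact (hcont.sub hcont2).intervalIntegrable _ _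
    · intro x hx
      have hx1 : z1 / 2 - c < x := hx.1
      have hsq : x ^ 2 < (x + 2 * c) ^ 2 := by nlinarith
      have := gaussianPDFReal_lt_aux hv hsq
      rw [← hfdef] at this
      linarith
    · linarith
  have hN : (∫ x in (z1 / 2 + c)..(z2 / 2 + c), f x)
      = ∫ x in (z1 / 2 - c)..(z2 / 2 - c), f (x + 2 * c) := by
    rw [intervalIntegral.integral_comp_add_right f (2 * c)]
    congr 1 <;> ring
  have hsub : (∫ x in (z1 / 2 - c)..(z2 / 2 - c), (f x - f (x + 2 * c)))
      = (∫ x in (z1 / 2 - c)..(z2 / 2 - c), f x)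
        - ∫ x in (z1 / 2 - c)..(z2 / 2 - c), f (x + 2 * c) :=
    intervalIntegral.integral_sub (hii _ _) (hcont2.intervalIntegrable _ _)
  have hadd1 : (∫ x in (z1 / 2 - c)..(z1 / 2 + c), f x)
      + (∫ x in (z1 / 2 + c)..(z2 / 2 + c), f x)
      = ∫ x in (z1 / 2 - c)..(z2 / 2 + c), f x :=
    intervalIntegral.integral_add_adjacent_intervals (hii _ _) (hii _ _)
  have hadd2 : (∫ x in (z1 / 2 - c)..(z2 / 2 - c), f x)
      + (∫ x in (z2 / 2 - c)..(z2 / 2 + c), f x)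
      = ∫ x in (z1 / 2 - c)..(z2 / 2 + c), f x :=
    intervalIntegral.integral_add_adjacent_intervals (hii _ _) (hii _ _)
  linarith
end
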